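/- Let Z be a finite-dimensional real vector space and let A : [0,r] → B_sym(Z,ℝ) be a C¹ map into the space of symmetric bilinear forms on Z. Let N = Ker(A(0)) = {v ∈ Z : A(0)(v,w) = 0 for all w ∈ Z} and let Ã denote the restriction of the derivative A'(0) to N × N. If Ã is nondegenerate on N, then there exists δ > 0 such that for all t ∈ (0,δ]: A(t) is nondegenerate, n₊(A(t)) = n₊(A(0)) + n₊(Ã), and n₋(A(t)) = n₋(A(0)) + n₋(Ã). -/

import Mathlib

/-!
Take maximal subspaces `P₊`, `P₋` on which `A 0` is positive, resp. negative, definite and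
maximal subspaces `K₊`, `K₋` of `N = ker (A 0)` on which `Ã` is. On `P₊ ⊕ K₊` the form `A 0` is
positive semidefinite and vanishes exactly on `K₊`, where `A' 0` is positive, so by compactness of
the unit sphere `A t = A 0 + t • A' 0 + o(t)` is positive definite there for small `t > 0`;
likewise `A t` is negative definite on `P₋ ⊕ K₋`. By Sylvester's law of inertia,
`n₊ + n₋ + dim ker = dim` for every symmetric form, and `n₊(Ã) + n₋(Ã) = dim N` since `Ã` is
nondegenerate; hence these two subspaces have complementary dimensions, which forces
`n₊(A t)`, `n₋(A t)` to be their dimensions and `ker (A t) = 0`.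
-/

open Set

/-- The positive type number `n₊` of a bilinear form `B`, restricted to a subspace `W`:
supremum of the dimensions of the subspaces of `W` on which `B` is positive definite. -/
noncomputable def nPos {Z : Type*} [NormedAddCommGroup Z] [NormedSpace ℝ Z]
    (B : Z →L[ℝ] Z →L[ℝ] ℝ) (W : Submodule ℝ Z) : ℕ :=
  sSup {d : ℕ | ∃ W' : Submodule ℝ Z, W' ≤ W ∧ Module.finrank ℝ ↥W' = d ∧
    ∀ x ∈ W', x ≠ 0 → 0 < B x x}

/-- The negative type number `n₋` of a bilinear form `B`, restricted to a subspace `W`. -/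
noncomputable def nNeg {Z : Type*} [NormedAddCommGroup Z] [NormedSpace ℝ Z]
    (B : Z →L[ℝ] Z →L[ℝ] ℝ) (W : Submodule ℝ Z) : ℕ :=
  sSup {d : ℕ | ∃ W' : Submodule ℝ Z, W' ≤ W ∧ Module.finrank ℝ ↥W' = d ∧
    ∀ x ∈ W', x ≠ 0 → B x x < 0}

/-- The kernel of a bilinear form `B`. -/
def kerForm {Z : Type*} [NormedAddCommGroup Z] [NormedSpace ℝ Z]
    (B : Z →L[ℝ] Z →L[ℝ] ℝ) : Submodule ℝ Z where
  carrier := {x | ∀ y, B x y = 0}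
  add_mem' := by
    intro x y hx hy z
    simp [map_add, hx z, hy z]
  zero_mem' := by
    intro z
    simp
  smul_mem' := by
    intro c x hx z
    simp [map_smul, hx z]

open Filter Topology

namespace TypeNumbers

lemma exists_Ioc_of_eventually_nhdsGT {p : ℝ → Prop} {a r : ℝ} (hr : a < r)
    (h : ∀ᶠ t in 𝓝[>] a, p t) : ∃ δ, a < δ ∧ δ ≤ r ∧ ∀ t ∈ Ioc a δ, p t := by
  obtain ⟨u, hu, hsub⟩ := mem_nhdsGT_iff_exists_Ioc_subset.1 h
  exact ⟨min u r, lt_min hu hr, min_le_right _ _,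
    fun t ht => hsub ⟨ht.1, ht.2.trans (min_le_left _ _)⟩⟩

variable {Z : Type*} [NormedAddCommGroup Z] [NormedSpace ℝ Z]

def PosDefOn (B : Z →L[ℝ] Z →L[ℝ] ℝ) (V : Submodule ℝ Z) : Prop :=
  ∀ x ∈ V, x ≠ 0 → 0 < B x x

lemma PosDefOn.nonneg {B : Z →L[ℝ] Z →L[ℝ] ℝ} {V : Submodule ℝ Z} (hB : PosDefOn B V)
    {x : Z} (hx : x ∈ V) : 0 ≤ B x x := by
  rcases eq_or_ne x 0 with rfl | hx0
  · simp
  · exact (hB x hx hx0).le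

noncomputable def quadFormOn (B : Z →L[ℝ] Z →L[ℝ] ℝ) (W : Submodule ℝ Z) : QuadraticForm ℝ W :=
  (LinearMap.BilinMap.toQuadraticMap (ContinuousLinearMap.toLinearMap₁₂ B)).restrict W

@[simp]
lemma quadFormOn_apply (B : Z →L[ℝ] Z →L[ℝ] ℝ) (W : Submodule ℝ Z) (x : W) :
    quadFormOn B W x = B x x := rfl

lemma quadFormOn_neg (B : Z →L[ℝ] Z →L[ℝ] ℝ) (W : Submodule ℝ Z) :
    quadFormOn (-B) W = -quadFormOn B W := by
  ext; simp

lemma mem_radical_quadFormOn {B : Z →L[ℝ] Z →L[ℝ] ℝ} (hB : ∀ x y, B x y = B y x)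
    {W : Submodule ℝ Z} {x : W} : x ∈ (quadFormOn B W).radical ↔ ∀ y : W, B x y = 0 := by
  simp only [QuadraticMap.radical_eq_ker_polarBilin, LinearMap.mem_ker, LinearMap.ext_iff,
    QuadraticMap.polarBilin_apply_apply, LinearMap.zero_apply, QuadraticMap.polar,
    quadFormOn_apply, Submodule.coe_add, map_add, add_apply]
  refine forall_congr' fun y => ?_
  rw [hB y x]
  constructor <;> intro h <;> linarith

lemma nNeg_eq_nPos_neg (B : Z →L[ℝ] Z →L[ℝ] ℝ) (W : Submodule ℝ Z) :
    nNeg B W = nPos (-B) W := by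
  simp only [nNeg, nPos, neg_apply, neg_pos]

lemma kerForm_neg (B : Z →L[ℝ] Z →L[ℝ] ℝ) : kerForm (-B) = kerForm B :=
  Submodule.ext fun _ => forall_congr' fun _ => by simp

lemma apply_add_self_of_mem_kerForm {B : Z →L[ℝ] Z →L[ℝ] ℝ} (hB : ∀ x y, B x y = B y x)
    {k : Z} (hk : k ∈ kerForm B) (x : Z) : B (x + k) (x + k) = B x x := by
  have hk' : ∀ y, B k y = 0 := hk
  simp [hk', hB x k]

lemma posDefOn_of_forall_norm_eq_one {B : Z →L[ℝ] Z →L[ℝ] ℝ} {V : Submodule ℝ Z}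
    (h : ∀ x ∈ V, ‖x‖ = 1 → 0 < B x x) : PosDefOn B V := by
  intro x hx hx0
  have hn : 0 < ‖x‖ := norm_pos_iff.2 hx0
  have hu := h (‖x‖⁻¹ • x) (V.smul_mem _ hx) (by
    rw [norm_smul, norm_inv, norm_norm, inv_mul_cancel₀ hn.ne'])
  have hscale : B (‖x‖⁻¹ • x) (‖x‖⁻¹ • x) = (‖x‖⁻¹) ^ 2 * B x x := by
    simp only [map_smul, smul_apply, smul_eq_mul]; ring
  rw [hscale] at hu
  exact pos_of_mul_pos_right hu (by positivity)

lemma symm_of_tendsto_slope {A : ℝ → Z →L[ℝ] Z →L[ℝ] ℝ} {D : Z →L[ℝ] Z →L[ℝ] ℝ}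
    (hA : Tendsto (slope A 0) (𝓝[>] 0) (𝓝 D)) (hA0 : ∀ x y, A 0 x y = A 0 y x)
    (hAt : ∀ᶠ t in 𝓝[>] 0, ∀ x y, A t x y = A t y x) : ∀ x y, D x y = D y x := by
  have hS : IsClosed {B : Z →L[ℝ] Z →L[ℝ] ℝ | ∀ x y, B x y = B y x} := by
    simp only [Set.ofPred_forall]
    exact isClosed_iInter fun x => isClosed_iInter fun y => isClosed_eq (by fun_prop) (by fun_prop)
  refine hS.mem_of_tendsto hA (hAt.mono fun t ht x y => ?_)
  simp [slope_def_module, ht x y, hA0 x y]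

section FiniteDimensional

variable [FiniteDimensional ℝ Z]

lemma isGreatest_sigPos_quadFormOn (B : Z →L[ℝ] Z →L[ℝ] ℝ) (W : Submodule ℝ Z) :
    IsGreatest {d : ℕ | ∃ W' : Submodule ℝ Z, W' ≤ W ∧ Module.finrank ℝ W' = d ∧ PosDefOn B W'}
      (sigPos (quadFormOn B W)) := by
  constructor
  · obtain ⟨V, hV, hpos⟩ := exists_finrank_eq_sigPos_and_posDef (quadFormOn B W)
    refine ⟨V.map W.subtype, Submodule.map_subtype_le W V, by simpa using hV, ?_⟩
    rintro _ ⟨x, hx, rfl⟩ hx0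
    exact hpos ⟨x, hx⟩ (by simpa using hx0)
  · rintro _ ⟨W', hW', rfl, hpos⟩
    have hmap : (W'.comap W.subtype).map W.subtype = W' := by
      rw [Submodule.map_comap_subtype]; exact inf_eq_right.2 hW'
    rw [← hmap, Submodule.finrank_map_subtype_eq]
    refine le_sigPos_of_posDef (quadFormOn B W) fun x hx0 => hpos _ x.2 ?_
    simpa using hx0

lemma nPos_eq_sigPos (B : Z →L[ℝ] Z →L[ℝ] ℝ) (W : Submodule ℝ Z) :
    nPos B W = sigPos (quadFormOn B W) :=
  (isGreatest_sigPos_quadFormOn B W).csSup_eq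

lemma nNeg_eq_sigNeg (B : Z →L[ℝ] Z →L[ℝ] ℝ) (W : Submodule ℝ Z) :
    nNeg B W = sigNeg (quadFormOn B W) := by
  rw [nNeg_eq_nPos_neg, nPos_eq_sigPos, quadFormOn_neg, sigPos_neg]

lemma exists_finrank_eq_nPos (B : Z →L[ℝ] Z →L[ℝ] ℝ) (W : Submodule ℝ Z) :
    ∃ W' : Submodule ℝ Z, W' ≤ W ∧ Module.finrank ℝ W' = nPos B W ∧ PosDefOn B W' :=
  nPos_eq_sigPos B W ▸ (isGreatest_sigPos_quadFormOn B W).1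

lemma finrank_le_nPos {B : Z →L[ℝ] Z →L[ℝ] ℝ} {W W' : Submodule ℝ Z} (hW' : W' ≤ W)
    (hpos : PosDefOn B W') : Module.finrank ℝ W' ≤ nPos B W :=
  nPos_eq_sigPos B W ▸ (isGreatest_sigPos_quadFormOn B W).2 ⟨W', hW', rfl, hpos⟩

lemma nPos_add_nNeg_add_finrank_eq {B : Z →L[ℝ] Z →L[ℝ] ℝ} (hB : ∀ x y, B x y = B y x)
    (W K : Submodule ℝ Z) (hK : ∀ x, x ∈ K ↔ x ∈ W ∧ ∀ y ∈ W, B x y = 0) :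
    nPos B W + nNeg B W + Module.finrank ℝ K = Module.finrank ℝ W := by
  have hKrad : K = (quadFormOn B W).radical.map W.subtype := by
    ext x
    rw [hK, Submodule.mem_map]
    constructor
    · rintro ⟨hxW, hx⟩
      exact ⟨⟨x, hxW⟩, mem_radical_quadFormOn hB |>.2 fun y => hx y y.2, rfl⟩
    · rintro ⟨x, hx, rfl⟩
      exact ⟨x.2, fun y hy => (mem_radical_quadFormOn hB).1 hx ⟨y, hy⟩⟩
  rw [nPos_eq_sigPos, nNeg_eq_sigNeg, hKrad, Submodule.finrank_map_subtype_eq]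
  exact QuadraticForm.sigPos_add_sigNeg_add_radical

lemma nPos_add_nNeg_add_finrank_kerForm {B : Z →L[ℝ] Z →L[ℝ] ℝ} (hB : ∀ x y, B x y = B y x) :
    nPos B ⊤ + nNeg B ⊤ + Module.finrank ℝ (kerForm B) = Module.finrank ℝ Z := by
  rw [nPos_add_nNeg_add_finrank_eq hB ⊤ (kerForm B) fun x => by simp [kerForm], finrank_top]

lemma nPos_add_nNeg_of_nondegenerate {B : Z →L[ℝ] Z →L[ℝ] ℝ} (hB : ∀ x y, B x y = B y x)
    {W : Submodule ℝ Z} (hW : ∀ x ∈ W, (∀ y ∈ W, B x y = 0) → x = 0) :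
    nPos B W + nNeg B W = Module.finrank ℝ W := by
  simpa using nPos_add_nNeg_add_finrank_eq hB W ⊥ fun x =>
    ⟨by rintro rfl; simp, fun ⟨hx, hxW⟩ => hW x hx hxW⟩

lemma nondegenerate_and_nPos_nNeg_eq_finrank {B : Z →L[ℝ] Z →L[ℝ] ℝ}
    (hB : ∀ x y, B x y = B y x) {P N : Submodule ℝ Z} (hP : PosDefOn B P) (hN : PosDefOn (-B) N)
    (hdim : Module.finrank ℝ P + Module.finrank ℝ N = Module.finrank ℝ Z) :
    (∀ x, (∀ y, B x y = 0) → x = 0) ∧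
      nPos B ⊤ = Module.finrank ℝ P ∧ nNeg B ⊤ = Module.finrank ℝ N := by
  have hcount := nPos_add_nNeg_add_finrank_kerForm hB
  have hP' : Module.finrank ℝ P ≤ nPos B ⊤ := finrank_le_nPos le_top hP
  have hN' : Module.finrank ℝ N ≤ nNeg B ⊤ := nNeg_eq_nPos_neg B ⊤ ▸ finrank_le_nPos le_top hN
  have hker : kerForm B = ⊥ := Submodule.finrank_eq_zero.1 (by omega)
  exact ⟨fun x hx => (Submodule.eq_bot_iff _).1 hker x hx, by omega, by omega⟩

lemma eventually_posDefOn_add_smul {B D : Z →L[ℝ] Z →L[ℝ] ℝ} {V : Submodule ℝ Z}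
    (h0 : ∀ x ∈ V, 0 ≤ B x x) (h1 : ∀ x ∈ V, x ≠ 0 → B x x = 0 → 0 < D x x) :
    ∀ᶠ p : ℝ × (Z →L[ℝ] Z →L[ℝ] ℝ) in 𝓝 (0, D), 0 < p.1 → PosDefOn (B + p.1 • p.2) V := by
  have hK : IsCompact ((V : Set Z) ∩ Metric.sphere 0 1) :=
    (isCompact_sphere 0 1).inter_left V.closed_of_finiteDimensional
  have key := hK.eventually_forall_of_forall_eventually (x₀ := ((0 : ℝ), D))
    (P := fun p x => x ∈ V → 0 < p.1 → 0 < (B + p.1 • p.2) x x) ?_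
  · filter_upwards [key] with p hp hp0
    exact posDefOn_of_forall_norm_eq_one fun x hx hx1 => hp x ⟨hx, by simpa using hx1⟩ hx hp0
  rintro z ⟨hzV, hz1⟩
  have hz0 : z ≠ 0 := by rintro rfl; simp at hz1
  -- If `B z z = 0`, then `D z z > 0` and `B ≥ 0` on `V` give `B x x + s * E x x > 0` near `(0, D, z)`.
  rcases (h0 z hzV).lt_or_eq with hpos | hzero
  · have hc : Continuous fun q : (ℝ × (Z →L[ℝ] Z →L[ℝ] ℝ)) × Z => (B + q.1.1 • q.1.2) q.2 q.2 := by
      fun_prop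
    filter_upwards [hc.continuousAt.eventually (lt_mem_nhds (by simpa using hpos))] with q hq _ _
    exact hq
  · have hc : Continuous fun q : (ℝ × (Z →L[ℝ] Z →L[ℝ] ℝ)) × Z => q.1.2 q.2 q.2 := by fun_prop
    filter_upwards [hc.continuousAt.eventually (lt_mem_nhds (h1 z hzV hz0 hzero.symm))]
      with q hq hqV hq0
    simp only [add_apply, smul_apply, smul_eq_mul]
    nlinarith [h0 q.2 hqV, mul_pos hq0 hq]

lemma eventually_posDefOn_of_tendsto_slope {A : ℝ → Z →L[ℝ] Z →L[ℝ] ℝ}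
    {D : Z →L[ℝ] Z →L[ℝ] ℝ} (hA : Tendsto (slope A 0) (𝓝[>] 0) (𝓝 D)) {V : Submodule ℝ Z}
    (h0 : ∀ x ∈ V, 0 ≤ A 0 x x) (h1 : ∀ x ∈ V, x ≠ 0 → A 0 x x = 0 → 0 < D x x) :
    ∀ᶠ t in 𝓝[>] 0, PosDefOn (A t) V := by
  have hpair : Tendsto (fun t => (t, slope A 0 t)) (𝓝[>] 0) (𝓝 (0, D)) :=
    (tendsto_nhdsWithin_of_tendsto_nhds tendsto_id).prodMk_nhds hA
  filter_upwards [hpair.eventually (eventually_posDefOn_add_smul h0 h1), self_mem_nhdsWithin]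
    with t ht htpos
  have hAt : A t = t • slope A 0 t + A 0 := by simpa using (sub_smul_slope_vadd A 0 t).symm
  rw [hAt, add_comm (t • slope A 0 t)]
  exact ht htpos

lemma eventually_exists_posDefOn_finrank_eq {A : ℝ → Z →L[ℝ] Z →L[ℝ] ℝ}
    {D : Z →L[ℝ] Z →L[ℝ] ℝ} (hA : Tendsto (slope A 0) (𝓝[>] 0) (𝓝 D))
    (hA0 : ∀ x y, A 0 x y = A 0 y x) :
    ∀ᶠ t in 𝓝[>] 0, ∃ V : Submodule ℝ Z,
      Module.finrank ℝ V = nPos (A 0) ⊤ + nPos D (kerForm (A 0)) ∧ PosDefOn (A t) V := by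
  obtain ⟨P, -, hPdim, hP⟩ := exists_finrank_eq_nPos (A 0) ⊤
  obtain ⟨K, hKN, hKdim, hK⟩ := exists_finrank_eq_nPos D (kerForm (A 0))
  have hdisj : Disjoint P K := Submodule.disjoint_def.2 fun x hxP hxK =>
    by_contra fun hx0 => (hP x hxP hx0).ne' (hKN hxK x)
  have hdim : Module.finrank ℝ ↥(P ⊔ K) = nPos (A 0) ⊤ + nPos D (kerForm (A 0)) := by
    rw [← hPdim, ← hKdim, ← Submodule.finrank_sup_add_finrank_inf_eq, hdisj.eq_bot, finrank_bot,
      add_zero]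
  refine (eventually_posDefOn_of_tendsto_slope hA ?_ ?_).mono fun t ht => ⟨P ⊔ K, hdim, ht⟩
  · intro v hv
    obtain ⟨p, hp, k, hk, rfl⟩ := Submodule.mem_sup.1 hv
    rw [apply_add_self_of_mem_kerForm hA0 (hKN hk)]
    exact hP.nonneg hp
  · intro v hv hv0 hvv
    obtain ⟨p, hp, k, hk, rfl⟩ := Submodule.mem_sup.1 hv
    rw [apply_add_self_of_mem_kerForm hA0 (hKN hk)] at hvv
    obtain rfl : p = 0 := by_contra fun hp0 => (hP p hp hp0).ne' hvv
    rw [zero_add] at hv0 ⊢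
    exact hK k hk hv0

lemma eventually_exists_negDefOn_finrank_eq {A : ℝ → Z →L[ℝ] Z →L[ℝ] ℝ}
    {D : Z →L[ℝ] Z →L[ℝ] ℝ} (hA : Tendsto (slope A 0) (𝓝[>] 0) (𝓝 D))
    (hA0 : ∀ x y, A 0 x y = A 0 y x) :
    ∀ᶠ t in 𝓝[>] 0, ∃ V : Submodule ℝ Z,
      Module.finrank ℝ V = nNeg (A 0) ⊤ + nNeg D (kerForm (A 0)) ∧ PosDefOn (-A t) V := by
  have hA' : Tendsto (slope (fun t => -A t) 0) (𝓝[>] 0) (𝓝 (-D)) := by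
    -- `Tendsto.neg` cannot find `ContinuousNeg` on this space of bilinear maps
    rw [show slope (fun t => -A t) 0 = fun t => -slope A 0 t from funext (slope_neg A 0)]
    exact ((LinearIsometryEquiv.neg ℝ).continuous.tendsto D).comp hA
  have := eventually_exists_posDefOn_finrank_eq hA' fun x y => by simp [hA0 x y]
  rwa [kerForm_neg, ← nNeg_eq_nPos_neg, ← nNeg_eq_nPos_neg] at this

end FiniteDimensional

end TypeNumbers

open TypeNumbers

/-- If `A : [0,r] → B_sym(Z,ℝ)` is `C¹` and the restriction `Ã` of `A'(0)` to
`N = Ker(A(0))` is nondegenerate, then for small `t > 0` the form `A(t)` is nondegenerate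
and `n₊(A(t)) = n₊(A(0)) + n₊(Ã)`, `n₋(A(t)) = n₋(A(0)) + n₋(Ã)`. -/
theorem type_numbers_perturbation
    {Z : Type*} [NormedAddCommGroup Z] [NormedSpace ℝ Z] [FiniteDimensional ℝ Z]
    {r : ℝ} (hr : 0 < r)
    (A : ℝ → Z →L[ℝ] Z →L[ℝ] ℝ)
    (hA : ContDiffOn ℝ 1 A (Icc 0 r))
    (hAsymm : ∀ t ∈ Icc 0 r, ∀ x y : Z, A t x y = A t y x)
    (hnd : ∀ x ∈ kerForm (A 0),
      (∀ y ∈ kerForm (A 0), derivWithin A (Icc 0 r) 0 x y = 0) → x = 0) :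
    ∃ δ > 0, δ ≤ r ∧ ∀ t ∈ Ioc (0:ℝ) δ,
      (∀ x : Z, (∀ y : Z, A t x y = 0) → x = 0) ∧
      nPos (A t) ⊤ = nPos (A 0) ⊤ + nPos (derivWithin A (Icc 0 r) 0) (kerForm (A 0)) ∧
      nNeg (A t) ⊤ = nNeg (A 0) ⊤ + nNeg (derivWithin A (Icc 0 r) 0) (kerForm (A 0)) := by
  have h0 : (0 : ℝ) ∈ Icc 0 r := ⟨le_rfl, hr.le⟩
  have hIcc : Icc 0 r ∈ 𝓝[>] (0 : ℝ) := Icc_mem_nhdsGT hr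
  have hslope : Tendsto (slope A 0) (𝓝[>] 0) (𝓝 (derivWithin A (Icc 0 r) 0)) :=
    (hasDerivWithinAt_iff_tendsto_slope' (f := A) (lt_irrefl 0)).1
      ((hA.differentiableOn one_ne_zero 0 h0).hasDerivWithinAt.mono_of_mem_nhdsWithin hIcc)
  have hA0 := hAsymm 0 h0
  have hcountA := nPos_add_nNeg_add_finrank_kerForm hA0
  have hcountD := nPos_add_nNeg_of_nondegenerate
    (symm_of_tendsto_slope hslope hA0 (mem_of_superset hIcc hAsymm)) hnd
  obtain ⟨δ, hδ, hδr, hsmall⟩ := exists_Ioc_of_eventually_nhdsGT hr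
    ((eventually_exists_posDefOn_finrank_eq hslope hA0).and
      (eventually_exists_negDefOn_finrank_eq hslope hA0))
  refine ⟨δ, hδ, hδr, fun t ht => ?_⟩
  obtain ⟨⟨P, hPdim, hP⟩, N, hNdim, hN⟩ := hsmall t ht
  rw [← hPdim, ← hNdim]
  exact nondegenerate_and_nPos_nNeg_eq_finrank (hAsymm t ⟨ht.1.le, ht.2.trans hδr⟩) hP hN
    (by omega)
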